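/- arXiv:math/0304102 — 7 statements merged into one kernel-verified Lean document; each statement's English description precedes it below -/
import Mathlib

section
/- The domain Ω_α^> = {x ∈ ℝ⁴ : x₄ > x₁x₂ + x₃² + x₁²x₃ + α x₁⁴} is affinely homogeneous: for every point x⁰ ∈ Ω_α^> there exists an affine automorphism of ℝ⁴ preserving Ω_α^> that maps the point (0,0,0,1) to x⁰. -/
noncomputable section

namespace OmegaAux

/-- forward affine map -/
def Fmap (α a b c q : ℝ) : ℝ × ℝ × ℝ × ℝ → ℝ × ℝ × ℝ × ℝ := fun x =>
  (q * x.1 + a,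
   q ^ 3 * x.2.1 + (q * (2 * α * a ^ 2 - 16 * α ^ 2 * a ^ 2 - c)) * x.1
     + ((8 * α * a - 2 * a) * q ^ 2) * x.2.2.1 + b,
   q ^ 2 * x.2.2.1 - 4 * α * a * q * x.1 + c,
   q ^ 4 * x.2.2.2 + (b + a * c - 8 * α * a * c + 2 * α * a ^ 3 - 16 * α ^ 2 * a ^ 3) * q * x.1
     + a * q ^ 3 * x.2.1 + (2 * c - a ^ 2 + 8 * α * a ^ 2) * q ^ 2 * x.2.2.1
     + (c ^ 2 + a * b + a ^ 2 * c + α * a ^ 4))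

/-- inverse affine map -/
def Gmap (α a b c q : ℝ) : ℝ × ℝ × ℝ × ℝ → ℝ × ℝ × ℝ × ℝ := fun u =>
  ((u.1 - a) / q,
   (u.2.1 - b - (2 * α * a ^ 2 - 16 * α ^ 2 * a ^ 2 - c) * (u.1 - a)
     - (8 * α * a - 2 * a) * (u.2.2.1 - c + 4 * α * a * (u.1 - a))) / q ^ 3,
   (u.2.2.1 - c + 4 * α * a * (u.1 - a)) / q ^ 2,
   (u.2.2.2 - (c ^ 2 + a * b + a ^ 2 * c + α * a ^ 4)
     - (b + a * c - 8 * α * a * c + 2 * α * a ^ 3 - 16 * α ^ 2 * a ^ 3) * (u.1 - a)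
     - a * (u.2.1 - b - (2 * α * a ^ 2 - 16 * α ^ 2 * a ^ 2 - c) * (u.1 - a)
         - (8 * α * a - 2 * a) * (u.2.2.1 - c + 4 * α * a * (u.1 - a)))
     - (2 * c - a ^ 2 + 8 * α * a ^ 2) * (u.2.2.1 - c + 4 * α * a * (u.1 - a))) / q ^ 4)

/-- linear part of Fmap -/
def Lmap (α a b c q : ℝ) : ℝ × ℝ × ℝ × ℝ → ℝ × ℝ × ℝ × ℝ := fun x =>
  (q * x.1,
   q ^ 3 * x.2.1 + (q * (2 * α * a ^ 2 - 16 * α ^ 2 * a ^ 2 - c)) * x.1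
     + ((8 * α * a - 2 * a) * q ^ 2) * x.2.2.1,
   q ^ 2 * x.2.2.1 - 4 * α * a * q * x.1,
   q ^ 4 * x.2.2.2 + (b + a * c - 8 * α * a * c + 2 * α * a ^ 3 - 16 * α ^ 2 * a ^ 3) * q * x.1
     + a * q ^ 3 * x.2.1 + (2 * c - a ^ 2 + 8 * α * a ^ 2) * q ^ 2 * x.2.2.1)

/-- linear part of Gmap -/
def Mmap (α a b c q : ℝ) : ℝ × ℝ × ℝ × ℝ → ℝ × ℝ × ℝ × ℝ := fun u =>
  (u.1 / q,
   (u.2.1 - (2 * α * a ^ 2 - 16 * α ^ 2 * a ^ 2 - c) * u.1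
     - (8 * α * a - 2 * a) * (u.2.2.1 + 4 * α * a * u.1)) / q ^ 3,
   (u.2.2.1 + 4 * α * a * u.1) / q ^ 2,
   (u.2.2.2 - (b + a * c - 8 * α * a * c + 2 * α * a ^ 3 - 16 * α ^ 2 * a ^ 3) * u.1
     - a * (u.2.1 - (2 * α * a ^ 2 - 16 * α ^ 2 * a ^ 2 - c) * u.1
         - (8 * α * a - 2 * a) * (u.2.2.1 + 4 * α * a * u.1))
     - (2 * c - a ^ 2 + 8 * α * a ^ 2) * (u.2.2.1 + 4 * α * a * u.1)) / q ^ 4)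

def Lhom (α a b c q : ℝ) : (ℝ × ℝ × ℝ × ℝ) →ₗ[ℝ] ℝ × ℝ × ℝ × ℝ where
  toFun := Lmap α a b c q
  map_add' x y := by
    refine Prod.ext ?_ (Prod.ext ?_ (Prod.ext ?_ ?_)) <;>
      simp [Lmap, Prod.fst_add, Prod.snd_add] <;> ring
  map_smul' r x := by
    refine Prod.ext ?_ (Prod.ext ?_ (Prod.ext ?_ ?_)) <;>
      simp [Lmap, Prod.smul_fst, Prod.smul_snd, smul_eq_mul] <;> ring

def Mhom (α a b c q : ℝ) : (ℝ × ℝ × ℝ × ℝ) →ₗ[ℝ] ℝ × ℝ × ℝ × ℝ where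
  toFun := Mmap α a b c q
  map_add' x y := by
    refine Prod.ext ?_ (Prod.ext ?_ (Prod.ext ?_ ?_)) <;>
      simp [Mmap, Prod.fst_add, Prod.snd_add] <;> ring
  map_smul' r x := by
    refine Prod.ext ?_ (Prod.ext ?_ (Prod.ext ?_ ?_)) <;>
      simp [Mmap, Prod.smul_fst, Prod.smul_snd, smul_eq_mul] <;> ring

def Lequiv (α a b c q : ℝ) (hq : q ≠ 0) : (ℝ × ℝ × ℝ × ℝ) ≃ₗ[ℝ] ℝ × ℝ × ℝ × ℝ :=
  LinearEquiv.ofLinear (Lhom α a b c q) (Mhom α a b c q)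
    (by
      apply LinearMap.ext; intro u
      refine Prod.ext ?_ (Prod.ext ?_ (Prod.ext ?_ ?_)) <;>
        simp [Lhom, Mhom, Lmap, Mmap] <;> field_simp <;> ring)
    (by
      apply LinearMap.ext; intro x
      refine Prod.ext ?_ (Prod.ext ?_ (Prod.ext ?_ ?_)) <;>
        simp [Lhom, Mhom, Lmap, Mmap] <;> field_simp <;> ring)

def Faff (α a b c q : ℝ) (hq : q ≠ 0) : (ℝ × ℝ × ℝ × ℝ) ≃ᵃ[ℝ] ℝ × ℝ × ℝ × ℝ where
  toFun := Fmap α a b c q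
  invFun := Gmap α a b c q
  left_inv x := by
    refine Prod.ext ?_ (Prod.ext ?_ (Prod.ext ?_ ?_)) <;>
      simp [Fmap, Gmap] <;> field_simp <;> ring
  right_inv u := by
    refine Prod.ext ?_ (Prod.ext ?_ (Prod.ext ?_ ?_)) <;>
      simp [Fmap, Gmap] <;> field_simp <;> ring
  linear := Lequiv α a b c q hq
  map_vadd' p v := by
    refine Prod.ext ?_ (Prod.ext ?_ (Prod.ext ?_ ?_)) <;>
      simp [Fmap, Lequiv, Lhom, Lmap, Prod.fst_add, Prod.snd_add] <;> ring

/-- key identity: defect transforms by factor q^4 -/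
lemma key (α a b c q : ℝ) (x : ℝ × ℝ × ℝ × ℝ) :
    (Fmap α a b c q x).2.2.2 -
      ((Fmap α a b c q x).1 * (Fmap α a b c q x).2.1 + (Fmap α a b c q x).2.2.1 ^ 2
        + (Fmap α a b c q x).1 ^ 2 * (Fmap α a b c q x).2.2.1 + α * (Fmap α a b c q x).1 ^ 4)
    = q ^ 4 * (x.2.2.2 - (x.1 * x.2.1 + x.2.2.1 ^ 2 + x.1 ^ 2 * x.2.2.1 + α * x.1 ^ 4)) := by
  simp only [Fmap]
  ring

end OmegaAux

/-- The domain `Ω_α^>` is affinely homogeneous: every point is the image of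
`(0,0,0,1)` under an affine automorphism of `ℝ⁴` preserving the domain. -/
theorem Omega_gt_affinely_homogeneous (α : ℝ)
    (x0 : ℝ × ℝ × ℝ × ℝ)
    (hx : x0 ∈ {x : ℝ × ℝ × ℝ × ℝ |
        x.2.2.2 > x.1 * x.2.1 + x.2.2.1 ^ 2 + x.1 ^ 2 * x.2.2.1 + α * x.1 ^ 4}) :
    ∃ F : (ℝ × ℝ × ℝ × ℝ) ≃ᵃ[ℝ] (ℝ × ℝ × ℝ × ℝ),
      (⇑F '' {x : ℝ × ℝ × ℝ × ℝ |
          x.2.2.2 > x.1 * x.2.1 + x.2.2.1 ^ 2 + x.1 ^ 2 * x.2.2.1 + α * x.1 ^ 4} =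
        {x : ℝ × ℝ × ℝ × ℝ |
          x.2.2.2 > x.1 * x.2.1 + x.2.2.1 ^ 2 + x.1 ^ 2 * x.2.2.1 + α * x.1 ^ 4}) ∧
      F ((0 : ℝ), (0 : ℝ), (0 : ℝ), (1 : ℝ)) = x0 := by
  classical
  obtain ⟨a, b, c, d⟩ := x0
  set K : ℝ := d - (a * b + c ^ 2 + a ^ 2 * c + α * a ^ 4) with hK
  have hKpos : 0 < K := by
    simp only [Set.mem_setOf_eq] at hx
    simp only [hK]; linarith
  set q : ℝ := K ^ ((1 : ℝ) / 4) with hqdef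
  have hqpos : 0 < q := Real.rpow_pos_of_pos hKpos _
  have hqne : q ≠ 0 := ne_of_gt hqpos
  have hq4 : q ^ 4 = K := by
    rw [hqdef, ← Real.rpow_natCast (K ^ ((1:ℝ)/4)) 4, ← Real.rpow_mul hKpos.le]
    norm_num
  have hq4pos : 0 < q ^ 4 := by positivity
  refine ⟨OmegaAux.Faff α a b c q hqne, ?_, ?_⟩
  · ext y
    simp only [Set.mem_image, Set.mem_setOf_eq]
    constructor
    · rintro ⟨x, hxm, rfl⟩
      have := OmegaAux.key α a b c q x
      have hF : (OmegaAux.Faff α a b c q hqne) x = OmegaAux.Fmap α a b c q x := rfl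
      rw [hF]
      nlinarith [mul_pos hq4pos (sub_pos.mpr hxm)]
    · intro hy
      refine ⟨(OmegaAux.Faff α a b c q hqne).symm y, ?_, (OmegaAux.Faff α a b c q hqne).apply_symm_apply y⟩
      set x := (OmegaAux.Faff α a b c q hqne).symm y with hxdef
      have hFx : OmegaAux.Fmap α a b c q x = y :=
        (OmegaAux.Faff α a b c q hqne).apply_symm_apply y
      have hkey := OmegaAux.key α a b c q x
      rw [hFx] at hkey
      have h1 : 0 < q ^ 4 * (x.2.2.2 - (x.1 * x.2.1 + x.2.2.1 ^ 2 + x.1 ^ 2 * x.2.2.1 + α * x.1 ^ 4)) := by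
        rw [← hkey]; linarith
      have h2 : 0 < x.2.2.2 - (x.1 * x.2.1 + x.2.2.1 ^ 2 + x.1 ^ 2 * x.2.2.1 + α * x.1 ^ 4) := by
        by_contra h; push_neg at h; nlinarith
      simpa using by linarith
  · show OmegaAux.Fmap α a b c q ((0:ℝ), (0:ℝ), (0:ℝ), (1:ℝ)) = (a, b, c, d)
    simp only [OmegaAux.Fmap]
    refine Prod.ext ?_ (Prod.ext ?_ (Prod.ext ?_ ?_)) <;> simp
    rw [hq4, hK]; ring
end
end

section
/- The domain Ω_α^< = {x ∈ ℝ⁴ : x₄ < x₁x₂ + x₃² + x₁²x₃ + α x₁⁴} is affinely homogeneous: the group of affine automorphisms of ℝ⁴ preserving Ω_α^< acts transitively on Ω_α^<. -/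
/-!
`Ω_α^<` is the set where the polynomial `x₁x₂ + x₃² + x₁²x₃ + αx₁⁴ - x₄` is positive. The maps
`ψ_r`, `ν_t`, `μ_s` leave this polynomial invariant and `φ_q` multiplies it by `q⁴ > 0`, so all of
them preserve `Ω_α^<`. Composing `ψ`, `ν`, `μ` moves any point onto the `x₄`-axis, where
invariance forces it to be `(0, 0, 0, -d)` with `d > 0` the value of the polynomial, and a suitable
`φ_q` then sends it to `(0, 0, 0, -1)`. Every point of `Ω_α^<` thus lies in the orbit of a single
point.
-/

section

variable {k V₁ V₂ : Type*} [Ring k] [AddCommGroup V₁] [Module k V₁] [AddCommGroup V₂]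
  [Module k V₂]

def AffineMap.ofMapSub (f : V₁ → V₂)
    (hf : ∀ (c : k) p q, f (c • p + q) - f 0 = c • (f p - f 0) + (f q - f 0)) :
    V₁ →ᵃ[k] V₂ :=
  AffineMap.mk' f
    { toFun := fun p => f p - f 0
      map_add' := fun p q => by simpa using hf 1 p q
      map_smul' := fun c p => by simpa using hf c p 0 }
    0 fun p => by simp

noncomputable def Equiv.toAffineEquivOfMapSub (e : V₁ ≃ V₂)
    (he : ∀ (c : k) p q, e (c • p + q) - e 0 = c • (e p - e 0) + (e q - e 0)) :
    V₁ ≃ᵃ[k] V₂ :=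
  AffineEquiv.ofBijective (φ := AffineMap.ofMapSub e he) e.bijective

end

lemma Function.Surjective.image_setOf_pos_of_map_eq_mul {P : Type*} {f : P → P}
    (hf : f.Surjective) (g : P → ℝ) {c : ℝ} (hc : 0 < c) (hfg : ∀ p, g (f p) = c * g p) :
    f '' {p | 0 < g p} = {p | 0 < g p} := by
  have hpre : f ⁻¹' {p | 0 < g p} = {p | 0 < g p} := by
    ext p
    simp [hfg, mul_pos_iff_of_pos_left hc]
  calc f '' {p | 0 < g p} = f '' (f ⁻¹' {p | 0 < g p}) := by rw [hpre]
    _ = {p | 0 < g p} := hf.image_preimage _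

lemma AffineEquiv.exists_image_eq_apply_eq_of_forall_apply_eq {k V P : Type*} [Ring k]
    [AddCommGroup V] [Module k V] [AddTorsor V P] {S : Set P} (o : P)
    (h : ∀ p ∈ S, ∃ F : P ≃ᵃ[k] P, F '' S = S ∧ F p = o) {x y : P} (hx : x ∈ S) (hy : y ∈ S) :
    ∃ F : P ≃ᵃ[k] P, F '' S = S ∧ F x = y := by
  obtain ⟨Fx, hFxS, hFx⟩ := h x hx
  obtain ⟨Fy, hFyS, hFy⟩ := h y hy
  have hFyS' : Fy.symm '' S = S := by
    conv_lhs => rw [← hFyS]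
    exact Fy.toEquiv.symm_image_image S
  refine ⟨Fx.trans Fy.symm, ?_, ?_⟩
  · rw [AffineEquiv.coe_trans, Set.image_comp, hFxS, hFyS']
  · simp [hFx, ← hFy]

local notation "ℝ⁴" => ℝ × ℝ × ℝ × ℝ

noncomputable section

namespace OmegaLt

def defect (α : ℝ) (x : ℝ⁴) : ℝ :=
  x.1 * x.2.1 + x.2.2.1 ^ 2 + x.1 ^ 2 * x.2.2.1 + α * x.1 ^ 4 - x.2.2.2

lemma setOf_lt_eq_setOf_defect_pos (α : ℝ) :
    {x : ℝ⁴ | x.2.2.2 < x.1 * x.2.1 + x.2.2.1 ^ 2 + x.1 ^ 2 * x.2.2.1 + α * x.1 ^ 4} =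
      {x | 0 < defect α x} := by
  simp [defect]

def psiFun (α r : ℝ) (x : ℝ⁴) : ℝ⁴ :=
  (x.1 + r,
   -4 * α * (4 * α - 1) * r ^ 2 * x.1 + x.2.1 + 2 * (4 * α - 1) * r * x.2.2.1
     - 4 / 3 * α * (4 * α - 1) * r ^ 3,
   -4 * α * r * x.1 + x.2.2.1 - 2 * α * r ^ 2,
   -(4 / 3) * α * (4 * α - 1) * r ^ 3 * x.1 + r * x.2.1 + (4 * α - 1) * r ^ 2 * x.2.2.1
     + x.2.2.2 - 1 / 3 * α * (4 * α - 1) * r ^ 4)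

def psi (α r : ℝ) : ℝ⁴ ≃ᵃ[ℝ] ℝ⁴ :=
  Equiv.toAffineEquivOfMapSub
    ⟨psiFun α r, psiFun α (-r), fun x => by ext <;> simp only [psiFun] <;> ring,
      fun x => by ext <;> simp only [psiFun] <;> ring⟩
    fun c x y => by
      ext <;> simp only [Equiv.coe_fn_mk, psiFun, Prod.fst_add, Prod.snd_add, Prod.fst_sub,
        Prod.snd_sub, Prod.smul_fst, Prod.smul_snd, Prod.fst_zero, Prod.snd_zero, smul_eq_mul] <;>
      ring

@[simp]
lemma coe_psi (α r : ℝ) : ⇑(psi α r) = psiFun α r := rfl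

def nuFun (t : ℝ) (x : ℝ⁴) : ℝ⁴ :=
  (x.1, -t * x.1 + x.2.1, x.2.2.1 + t, 2 * t * x.2.2.1 + x.2.2.2 + t ^ 2)

def nu (t : ℝ) : ℝ⁴ ≃ᵃ[ℝ] ℝ⁴ :=
  Equiv.toAffineEquivOfMapSub
    ⟨nuFun t, nuFun (-t), fun x => by ext <;> simp only [nuFun] <;> ring,
      fun x => by ext <;> simp only [nuFun] <;> ring⟩
    fun c x y => by
      ext <;> simp only [Equiv.coe_fn_mk, nuFun, Prod.fst_add, Prod.snd_add, Prod.fst_sub,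
        Prod.snd_sub, Prod.smul_fst, Prod.smul_snd, Prod.fst_zero, Prod.snd_zero, smul_eq_mul] <;>
      ring

@[simp]
lemma coe_nu (t : ℝ) : ⇑(nu t) = nuFun t := rfl

def muFun (s : ℝ) (x : ℝ⁴) : ℝ⁴ :=
  (x.1, x.2.1 + s, x.2.2.1, s * x.1 + x.2.2.2)

def mu (s : ℝ) : ℝ⁴ ≃ᵃ[ℝ] ℝ⁴ :=
  Equiv.toAffineEquivOfMapSub
    ⟨muFun s, muFun (-s), fun x => by ext <;> simp only [muFun] <;> ring,
      fun x => by ext <;> simp only [muFun] <;> ring⟩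
    fun c x y => by
      ext <;> simp only [Equiv.coe_fn_mk, muFun, Prod.fst_add, Prod.snd_add, Prod.fst_sub,
        Prod.snd_sub, Prod.smul_fst, Prod.smul_snd, Prod.fst_zero, Prod.snd_zero, smul_eq_mul] <;>
      ring

@[simp]
lemma coe_mu (s : ℝ) : ⇑(mu s) = muFun s := rfl

def phiFun (q : ℝ) (x : ℝ⁴) : ℝ⁴ :=
  (q * x.1, q ^ 3 * x.2.1, q ^ 2 * x.2.2.1, q ^ 4 * x.2.2.2)

def phi (q : ℝ) (hq : q ≠ 0) : ℝ⁴ ≃ᵃ[ℝ] ℝ⁴ :=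
  Equiv.toAffineEquivOfMapSub
    ⟨phiFun q, phiFun q⁻¹, fun x => by ext <;> simp only [phiFun] <;> field_simp,
      fun x => by ext <;> simp only [phiFun] <;> field_simp⟩
    fun c x y => by
      ext <;> simp only [Equiv.coe_fn_mk, phiFun, Prod.fst_add, Prod.snd_add, Prod.fst_sub,
        Prod.snd_sub, Prod.smul_fst, Prod.smul_snd, Prod.fst_zero, Prod.snd_zero, smul_eq_mul] <;>
      ring

@[simp]
lemma coe_phi (q : ℝ) (hq : q ≠ 0) : ⇑(phi q hq) = phiFun q := rfl

@[simp]
lemma defect_psiFun (α r : ℝ) (x : ℝ⁴) : defect α (psiFun α r x) = defect α x := by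
  simp only [defect, psiFun]; ring

@[simp]
lemma defect_nuFun (α t : ℝ) (x : ℝ⁴) : defect α (nuFun t x) = defect α x := by
  simp only [defect, nuFun]; ring

@[simp]
lemma defect_muFun (α s : ℝ) (x : ℝ⁴) : defect α (muFun s x) = defect α x := by
  simp only [defect, muFun]; ring

lemma defect_phiFun (α q : ℝ) (x : ℝ⁴) : defect α (phiFun q x) = q ^ 4 * defect α x := by
  simp only [defect, phiFun]; ring

lemma phiFun_axis (q w : ℝ) : phiFun q (0, 0, 0, w) = (0, 0, 0, q ^ 4 * w) := by
  simp [phiFun]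

lemma exists_defect_eq_apply_eq_axis (α : ℝ) (x : ℝ⁴) :
    ∃ F : ℝ⁴ ≃ᵃ[ℝ] ℝ⁴, (∀ z, defect α (F z) = defect α z) ∧ F x = (0, 0, 0, -defect α x) := by
  -- `ψ` clears the first coordinate, then `ν` the third and `μ` the second.
  set x₁ := psi α (-x.1) x
  set x₂ := nu (-x₁.2.2.1) x₁
  refine ⟨(psi α (-x.1)).trans ((nu (-x₁.2.2.1)).trans (mu (-x₂.2.1))), fun z => by simp, ?_⟩
  simp only [AffineEquiv.trans_apply, x₁, x₂, coe_psi, coe_nu, coe_mu, psiFun, nuFun, muFun,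
    defect, Prod.ext_iff]
  refine ⟨?_, ?_, ?_, ?_⟩ <;> ring

lemma exists_image_eq_apply_eq_basePoint (α : ℝ) {x : ℝ⁴} (hx : 0 < defect α x) :
    ∃ F : ℝ⁴ ≃ᵃ[ℝ] ℝ⁴,
      F '' {z | 0 < defect α z} = {z | 0 < defect α z} ∧ F x = (0, 0, 0, -1) := by
  obtain ⟨G, hG, hGx⟩ := exists_defect_eq_apply_eq_axis α x
  set q := (√√(defect α x))⁻¹
  have hq : 0 < q := by positivity
  have hq4 : q ^ 4 * defect α x = 1 := by
    rw [inv_pow, show 4 = 2 * 2 from rfl, pow_mul, Real.sq_sqrt (Real.sqrt_nonneg _),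
      Real.sq_sqrt hx.le, inv_mul_cancel₀ hx.ne']
  refine ⟨G.trans (phi q hq.ne'), ?_, ?_⟩
  · exact (G.trans (phi q hq.ne')).surjective.image_setOf_pos_of_map_eq_mul _ (pow_pos hq 4)
      fun z => by simp [defect_phiFun, hG]
  · simp [hGx, phiFun_axis, hq4]

end OmegaLt

end

/-- The domain `Ω_α^<` is affinely homogeneous: the group of affine automorphisms
of `ℝ⁴` preserving it acts transitively. -/
theorem Omega_lt_affinely_homogeneous (α : ℝ)
    (x y : ℝ × ℝ × ℝ × ℝ)
    (hx : x ∈ {p : ℝ × ℝ × ℝ × ℝ |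
        p.2.2.2 < p.1 * p.2.1 + p.2.2.1 ^ 2 + p.1 ^ 2 * p.2.2.1 + α * p.1 ^ 4})
    (hy : y ∈ {p : ℝ × ℝ × ℝ × ℝ |
        p.2.2.2 < p.1 * p.2.1 + p.2.2.1 ^ 2 + p.1 ^ 2 * p.2.2.1 + α * p.1 ^ 4}) :
    ∃ F : (ℝ × ℝ × ℝ × ℝ) ≃ᵃ[ℝ] (ℝ × ℝ × ℝ × ℝ),
      (⇑F '' {p : ℝ × ℝ × ℝ × ℝ |
          p.2.2.2 < p.1 * p.2.1 + p.2.2.1 ^ 2 + p.1 ^ 2 * p.2.2.1 + α * p.1 ^ 4} =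
        {p : ℝ × ℝ × ℝ × ℝ |
          p.2.2.2 < p.1 * p.2.1 + p.2.2.1 ^ 2 + p.1 ^ 2 * p.2.2.1 + α * p.1 ^ 4}) ∧
      F x = y := by
  rw [OmegaLt.setOf_lt_eq_setOf_defect_pos] at hx hy ⊢
  exact AffineEquiv.exists_image_eq_apply_eq_of_forall_apply_eq _
    (fun p hp => OmegaLt.exists_image_eq_apply_eq_basePoint α hp) hx hy
end

section
/- The holomorphic polynomial map F : ℂ⁴ → ℂ⁴ given by F(z₁,z₂,z₃,z₄) = ((1/√2)(z₁+z₂+z₁z₃+z₁³/12), √2(z₃+z₁²/4), (1/√2)(z₁−z₂−z₁z₃−z₁³/12), 4z₄−2z₁z₂−2z₃²−z₁²z₃−z₁⁴/24) satisfies, for all z ∈ ℂ⁴: Re(F₄(z)) − |F₁(z)|² − |F₂(z)|² + |F₃(z)|² = 4(Re z₄ − Re z₁ · Re z₂ − (Re z₃)² − (Re z₁)²(Re z₃) − (1/12)(Re z₁)⁴). -/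
/-!
Writing `F₁ = (a + b)/√2` and `F₃ = (a - b)/√2` with `a = z₁`, `b = z₂ + z₁z₃ + z₁³/12`, the
polarization identity turns `|F₁|² - |F₃|²` into `2 Re(a b̄)`, and `|F₂|² = 2|z₃ + z₁²/4|²`.
What remains is a polynomial identity in the real and imaginary parts of the `zᵢ`: all terms
involving imaginary parts cancel.
-/

open Complex ComplexConjugate

namespace Complex

theorem normSq_add_sub_normSq_sub (a b : ℂ) :
    normSq (a + b) - normSq (a - b) = 4 * (a * conj b).re := by
  rw [normSq_add, normSq_sub]
  ring

theorem sq_norm_ofReal_mul (r : ℝ) (u : ℂ) : ‖(r : ℂ) * u‖ ^ 2 = r ^ 2 * normSq u := by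
  rw [Complex.sq_norm, normSq_mul, normSq_ofReal, sq]

theorem sq_norm_sqrt_two_mul (u : ℂ) : ‖(Real.sqrt 2 : ℂ) * u‖ ^ 2 = 2 * normSq u := by
  rw [sq_norm_ofReal_mul, Real.sq_sqrt zero_le_two]

theorem sq_norm_inv_sqrt_two_mul (u : ℂ) :
    ‖1 / (Real.sqrt 2 : ℂ) * u‖ ^ 2 = normSq u / 2 := by
  rw [← ofReal_one, ← ofReal_div, sq_norm_ofReal_mul, div_pow, Real.sq_sqrt zero_le_two]
  ring

end Complex

/-- The polynomial map transforming the tube over `x₄ = x₁x₂+x₃²+x₁²x₃+x₁⁴/12`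
into the quadric `Re z₄ = |z₁|²+|z₂|²−|z₃|²`. -/
theorem map_to_quadric_identity (z₁ z₂ z₃ z₄ : ℂ) :
    let F₁ := (1 / (Real.sqrt 2 : ℂ)) * (z₁ + z₂ + z₁ * z₃ + z₁ ^ 3 / 12)
    let F₂ := (Real.sqrt 2 : ℂ) * (z₃ + z₁ ^ 2 / 4)
    let F₃ := (1 / (Real.sqrt 2 : ℂ)) * (z₁ - z₂ - z₁ * z₃ - z₁ ^ 3 / 12)
    let F₄ := 4 * z₄ - 2 * z₁ * z₂ - 2 * z₃ ^ 2 - z₁ ^ 2 * z₃ - z₁ ^ 4 / 24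
    F₄.re - ‖F₁‖ ^ 2 - ‖F₂‖ ^ 2 + ‖F₃‖ ^ 2 =
      4 * (z₄.re - z₁.re * z₂.re - z₃.re ^ 2 - z₁.re ^ 2 * z₃.re
        - (1 / 12) * z₁.re ^ 4) := by
  intro F₁ F₂ F₃ F₄
  set b := z₂ + z₁ * z₃ + z₁ ^ 3 / 12
  have hF₁₃ : ‖F₁‖ ^ 2 - ‖F₃‖ ^ 2 = 2 * (z₁ * conj b).re := by
    have hF₁ : F₁ = 1 / (Real.sqrt 2 : ℂ) * (z₁ + b) := by simp only [F₁, b]; ring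
    have hF₃ : F₃ = 1 / (Real.sqrt 2 : ℂ) * (z₁ - b) := by simp only [F₃, b]; ring
    rw [hF₁, hF₃, sq_norm_inv_sqrt_two_mul, sq_norm_inv_sqrt_two_mul, ← sub_div,
      normSq_add_sub_normSq_sub]
    ring
  have hF₂ : ‖F₂‖ ^ 2 = 2 * normSq (z₃ + z₁ ^ 2 / 4) := sq_norm_sqrt_two_mul _
  calc F₄.re - ‖F₁‖ ^ 2 - ‖F₂‖ ^ 2 + ‖F₃‖ ^ 2
      = F₄.re - 2 * (z₁ * conj b).re - 2 * normSq (z₃ + z₁ ^ 2 / 4) := by linarith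
    _ = _ := by
      simp only [F₄, b, normSq_apply, pow_succ, pow_zero, one_mul, mul_re, mul_im, add_re,
        add_im, sub_re, div_re, div_im, conj_re, conj_im, re_ofNat, im_ofNat]
      ring
end

section
/- For α ≠ 1/12, the holomorphic map G : ℂ⁴ → ℂ⁴ defined by G(z) = (c z₁, (z₂+z₁z₃+αz₁³)/c, √2(z₃+z₁²/4), 4z₄−2z₁z₂−2z₃²−z₁²z₃−(α/2)z₁⁴) with c = |(3/2)(α−1/12)|^{1/4} satisfies, for all z ∈ ℂ⁴: Re(G₄(z)) − G₁(z)·conj(G₂(z)) − G₂(z)·conj(G₁(z)) − |G₃(z)|² − ε|G₁(z)|⁴ = 4(Re z₄ − Re z₁ · Re z₂ − (Re z₃)² − (Re z₁)²(Re z₃) − α(Re z₁)⁴), where ε = 1 if α > 1/12 and ε = −1 if α < 1/12. -/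
/-!
The real scale `c` is nonzero, so it cancels from `G₁ · conj G₂` and `G₂ · conj G₁`, and it is
chosen so that `ε c⁴ = (3/2)(α - 1/12)`, which turns `ε |G₁|⁴` into a polynomial in `z₁`. What
remains is a polynomial identity in the real and imaginary parts of `z`: the weight `α/2` in
`G₄`, the shift `z₁²/4` in `G₃` and the constant `1/12` are what make all terms
involving imaginary parts cancel.
-/

open Complex ComplexConjugate

lemma ite_pos_one_neg_one_mul_abs (a : ℝ) : (if 0 < a then (1 : ℝ) else -1) * |a| = a := by
  split_ifs with ha
  · rw [one_mul, abs_of_pos ha]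
  · rw [abs_of_nonpos (not_lt.mp ha), neg_one_mul, neg_neg]

lemma rpow_one_div_four_pow_four {b : ℝ} (hb : 0 ≤ b) : (b ^ ((1 : ℝ) / 4)) ^ 4 = b := by
  simpa [one_div] using Real.rpow_inv_natCast_pow hb (n := 4) four_ne_zero

namespace Complex

lemma ofReal_mul_mul_conj_div_ofReal {c : ℝ} (hc : c ≠ 0) (z w : ℂ) :
    (c : ℂ) * z * conj (w / c) = z * conj w := by
  have hc' : (c : ℂ) ≠ 0 := ofReal_ne_zero.mpr hc
  rw [map_div₀, conj_ofReal]
  field_simp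

lemma re_mul_conj_add_re_mul_conj (z w : ℂ) :
    (z * conj w).re + (w * conj z).re = 2 * (z * conj w).re := by
  rw [show w * conj z = conj (z * conj w) by simp [mul_comm], conj_re]
  ring

lemma norm_ofReal_mul_pow_four (c : ℝ) (z : ℂ) : ‖(c : ℂ) * z‖ ^ 4 = c ^ 4 * normSq z ^ 2 := by
  rw [show (4 : ℕ) = 2 * 2 by rfl, pow_mul, Complex.sq_norm, normSq_mul, normSq_ofReal]
  ring

lemma norm_sqrt_two_mul_sq (z : ℂ) : ‖(Real.sqrt 2 : ℂ) * z‖ ^ 2 = 2 * normSq z := by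
  rw [Complex.sq_norm, normSq_mul, normSq_ofReal, Real.mul_self_sqrt zero_le_two]

end Complex

lemma re_quartic_model_identity (α : ℝ) (z₁ z₂ z₃ z₄ : ℂ) :
    (4 * z₄ - 2 * z₁ * z₂ - 2 * z₃ ^ 2 - z₁ ^ 2 * z₃ - ((α : ℂ) / 2) * z₁ ^ 4).re
        - 2 * (z₁ * conj (z₂ + z₁ * z₃ + (α : ℂ) * z₁ ^ 3)).re
        - 2 * normSq (z₃ + z₁ ^ 2 / 4) - (3 / 2) * (α - 1 / 12) * normSq z₁ ^ 2 =
      4 * (z₄.re - z₁.re * z₂.re - z₃.re ^ 2 - z₁.re ^ 2 * z₃.re - α * z₁.re ^ 4) := by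
  simp only [normSq_apply, sub_re, add_re, mul_re, mul_im, add_im, ofReal_re, ofReal_im,
    div_re, div_im, conj_re, conj_im, re_ofNat, im_ofNat, pow_succ, pow_zero, one_mul]
  ring

/-- For `α ≠ 1/12`, the map `G` transforms the tube over
`x₄ = x₁x₂+x₃²+x₁²x₃+αx₁⁴` into the domain bounded by
`Re z₄ = z₁ conj z₂ + z₂ conj z₁ + |z₃|² ± |z₁|⁴`. -/
theorem map_to_nonumbilic_model_identity (α : ℝ) (hα : α ≠ 1 / 12)
    (z₁ z₂ z₃ z₄ : ℂ) :
    let c : ℝ := ((3 / 2) * |α - 1 / 12|) ^ ((1 : ℝ) / 4)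
    let ε : ℝ := if α > 1 / 12 then 1 else -1
    let G₁ := (c : ℂ) * z₁
    let G₂ := (z₂ + z₁ * z₃ + (α : ℂ) * z₁ ^ 3) / (c : ℂ)
    let G₃ := (Real.sqrt 2 : ℂ) * (z₃ + z₁ ^ 2 / 4)
    let G₄ := 4 * z₄ - 2 * z₁ * z₂ - 2 * z₃ ^ 2 - z₁ ^ 2 * z₃ - ((α : ℂ) / 2) * z₁ ^ 4
    G₄.re - (G₁ * (starRingEnd ℂ) G₂).re - (G₂ * (starRingEnd ℂ) G₁).re
        - ‖G₃‖ ^ 2 - ε * ‖G₁‖ ^ 4 =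
      4 * (z₄.re - z₁.re * z₂.re - z₃.re ^ 2 - z₁.re ^ 2 * z₃.re - α * z₁.re ^ 4) := by
  intro c ε G₁ G₂ G₃ G₄
  have hb : 0 < (3 / 2) * |α - 1 / 12| := by
    have := abs_pos.mpr (sub_ne_zero.mpr hα)
    positivity
  have hc : c ≠ 0 := (Real.rpow_pos_of_pos hb _).ne'
  have hεc : ε * c ^ 4 = (3 / 2) * (α - 1 / 12) := by
    rw [rpow_one_div_four_pow_four hb.le, mul_left_comm]
    simpa only [ε, gt_iff_lt, sub_pos] using congrArg ((3 / 2) * ·)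
      (ite_pos_one_neg_one_mul_abs (α - 1 / 12))
  have hcross : (G₁ * conj G₂).re + (G₂ * conj G₁).re
      = 2 * (z₁ * conj (z₂ + z₁ * z₃ + (α : ℂ) * z₁ ^ 3)).re := by
    rw [re_mul_conj_add_re_mul_conj, ofReal_mul_mul_conj_div_ofReal hc]
  have hG₁ : ε * ‖G₁‖ ^ 4 = (3 / 2) * (α - 1 / 12) * normSq z₁ ^ 2 := by
    rw [norm_ofReal_mul_pow_four, ← mul_assoc, hεc]
  rw [sub_sub _ (G₁ * conj G₂).re, hcross, norm_sqrt_two_mul_sq, hG₁]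
  exact re_quartic_model_identity α z₁ z₂ z₃ z₄
end

section
/- If P ∈ sl(3,ℂ) is a nonzero element such that the kernel of ad(P) restricted to the orthogonal complement P^⊥ (with respect to the trace form ⟨X,Y⟩ = tr(XY)) has dimension at least 4, then P is conjugate to the nilpotent matrix E₁₂ (the matrix with 1 in entry (1,2) and zeros elsewhere). -/
/-!
Write `C` for the centralizer of `P`; the kernel in the hypothesis is
`W = C ∩ ker tr ∩ ker tr(P ·)`. Since `1 ∈ C \ W` we get `dim C ≥ 5`, and if `tr P² ≠ 0` then
`P` and `1` are independent modulo `W` in `C`, so `dim C ≥ 6`. On the other hand a non-scalar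
`3 × 3` matrix has a vector `v` with `v, Pv` independent and a vector `w` with `Pw ≡ cw` modulo
`span {v, Pv}`; a matrix `X` commuting with `P` is determined by `Xv` and `Xw`, and
`Xw ∈ ker (P - c)` as soon as `Xv = 0`. Hence `dim C + rank (P - c) ≤ 6` with `P - c ≠ 0`, so
`P - c = u wᵀ` has rank one and `tr P² = 0`. Taking traces of `P = c + u wᵀ` and of its square
gives `6 c² = 0`, so `P = u wᵀ` with `w ⬝ u = tr P = 0`, i.e. `P² = 0`. A nonzero square-zero
`3 × 3` matrix is conjugate to `E₁₂`, and over `ℂ` the conjugating matrix can be rescaled by a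
cube root of its determinant to lie in `SL₃`.
-/

open Matrix Module LinearMap

theorem Submodule.exists_sup_span_singleton_eq_top {K V : Type*} [DivisionRing K]
    [AddCommGroup V] [Module K V] [FiniteDimensional K V] {S : Submodule K V}
    (h : finrank K S + 1 = finrank K V) :
    ∃ w, S ⊔ K ∙ w = ⊤ := by
  obtain ⟨w, hw⟩ : ∃ w, w ∉ S := by
    by_contra! hS
    rw [Submodule.eq_top_iff'.2 hS, finrank_top] at h
    omega
  have hlt : S < S ⊔ K ∙ w := SetLike.lt_iff_le_and_exists.2
    ⟨le_sup_left, w, Submodule.mem_sup_right (Submodule.mem_span_singleton_self w), hw⟩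
  have := Submodule.finrank_lt_finrank_of_lt hlt
  exact ⟨w, Submodule.eq_top_of_finrank_eq (le_antisymm (Submodule.finrank_le _) (by omega))⟩

namespace Matrix

variable {K n : Type*} [Field K] [Fintype n]

theorem span_pair_le_ker_mulVecLin {P X : Matrix n n K} (hPX : P * X = X * P) {v : n → K}
    (hv : X *ᵥ v = 0) : Submodule.span K (Set.range ![v, P *ᵥ v]) ≤ ker X.mulVecLin := by
  refine Submodule.span_le.2 (Set.range_subset_iff.2 fun i => ?_)
  fin_cases i
  · exact hv
  · change X *ᵥ (P *ᵥ v) = 0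
    rw [mulVec_mulVec, ← hPX, ← mulVec_mulVec, hv, mulVec_zero]

variable [DecidableEq n]

theorem rank_eq_zero_iff {m : Type*} {A : Matrix m n K} : A.rank = 0 ↔ A = 0 := by
  rw [rank, Submodule.finrank_eq_zero, range_eq_bot, ← toLin'_apply',
    LinearEquiv.map_eq_zero_iff]

theorem exists_eq_vecMulVec_of_rank_le_one {m : Type*} {A : Matrix m n K} (h : A.rank ≤ 1) :
    ∃ (u : m → K) (w : n → K), A = vecMulVec u w := by
  obtain ⟨u, hu⟩ := finrank_le_one_iff.mp h
  choose f hf using fun j => hu ⟨A *ᵥ Pi.single j 1, Pi.single j 1, rfl⟩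
  refine ⟨u, f, ?_⟩
  ext i j
  simpa [vecMulVec_apply, mul_comm] using
    congrArg (fun x : range A.mulVecLin => (x : m → K) i) (hf j).symm

theorem exists_linearIndependent_mulVec {P : Matrix n n K} (hP : ∀ c : K, P ≠ c • 1) :
    ∃ v, LinearIndependent K ![v, P *ᵥ v] := by
  by_contra! h
  obtain ⟨c, hc⟩ := exists_eq_smul_id_of_forall_notLinearIndependent (f := P.mulVecLin) h
  exact hP c (toLin'.injective (by rw [toLin'_apply', hc, map_smul, toLin'_one]; rfl))

theorem exists_specialLinearGroup_conj_eq_of_mul_eq_mul [IsAlgClosed K] [Nonempty n]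
    {A B g : Matrix n n K} (hg : IsUnit g.det) (h : g * A = B * g) :
    ∃ s : SpecialLinearGroup n K, (↑s : Matrix n n K) * A * (↑s⁻¹ : Matrix n n K) = B := by
  obtain ⟨t, ht⟩ := IsAlgClosed.exists_pow_nat_eq g.det (Fintype.card_pos (α := n))
  let s : SpecialLinearGroup n K :=
    ⟨t⁻¹ • g, by rw [det_smul, inv_pow, ht, inv_mul_cancel₀ hg.ne_zero]⟩
  have hs : (s : Matrix n n K) * A = B * (s : Matrix n n K) := by
    change t⁻¹ • g * A = B * (t⁻¹ • g)
    rw [Matrix.smul_mul, h, Matrix.mul_smul]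
  refine ⟨s, ?_⟩
  rw [hs, mul_assoc, ← SpecialLinearGroup.coe_mul, mul_inv_cancel, SpecialLinearGroup.coe_one,
    mul_one]

theorem mul_self_eq_zero_of_rank_sub_smul_one_le_one [CharZero K] (hn : 2 ≤ Fintype.card n)
    {P : Matrix n n K} {c : K} (hrank : (P - c • 1).rank ≤ 1) (htr : trace P = 0)
    (htrsq : trace (P * P) = 0) : P * P = 0 := by
  obtain ⟨u, w, huw⟩ := exists_eq_vecMulVec_of_rank_le_one hrank
  obtain rfl : P = c • 1 + vecMulVec u w := by rw [← huw]; abel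
  have hsq : vecMulVec u w * vecMulVec u w = (u ⬝ᵥ w) • vecMulVec u w := by
    rw [vecMulVec_mul_vecMulVec, vecMulVec_smul, dotProduct_comm]
  have hPP : (c • 1 + vecMulVec u w) * (c • 1 + vecMulVec u w) =
      (c * c) • 1 + (2 * c) • vecMulVec u w + vecMulVec u w * vecMulVec u w := by
    simp only [add_mul, mul_add, Matrix.smul_mul, Matrix.mul_smul, Matrix.one_mul,
      Matrix.mul_one, smul_smul]
    module
  rw [hPP, hsq] at htrsq ⊢
  simp only [trace_add, trace_smul, trace_one, trace_vecMulVec, smul_eq_mul] at htr htrsq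
  have hN : (Fintype.card n : K) * (Fintype.card n - 1) ≠ 0 :=
    mul_ne_zero (Nat.cast_ne_zero.2 (by omega)) (sub_ne_zero.2 (Nat.cast_ne_one.2 (by omega)))
  have hc : c = 0 := by
    have : (Fintype.card n : K) * (Fintype.card n - 1) * (c * c) = 0 := by
      linear_combination htrsq - (u ⬝ᵥ w - c * Fintype.card n + 2 * c) * htr
    simpa [hN] using this
  have hs : u ⬝ᵥ w = 0 := by simpa [hc] using htr
  simp [hc, hs]

theorem exists_isUnit_det_mul_eq_single_mul {P : Matrix (Fin 3) (Fin 3) K} (hP0 : P ≠ 0)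
    (hPP : P * P = 0) :
    ∃ g : Matrix (Fin 3) (Fin 3) K, IsUnit g.det ∧ g * P = single 0 1 1 * g := by
  obtain ⟨r, hr⟩ : ∃ r, r ᵥ* P ≠ 0 := by
    by_contra! h
    exact hP0 (ext fun i j => by simpa using congrFun (h (Pi.single i 1)) j)
  have hrange : range P.vecMulLinear ≤ ker P.vecMulLinear := by
    rintro _ ⟨x, rfl⟩
    simp [vecMul_vecMul, hPP]
  have hker : 2 ≤ finrank K (ker P.vecMulLinear) := by
    have h := finrank_range_add_finrank_ker P.vecMulLinear
    rw [finrank_fin_fun] at h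
    have := Submodule.finrank_mono hrange
    omega
  obtain ⟨r₂, hr₂P, hr₂⟩ : ∃ r₂ ∈ ker P.vecMulLinear, r₂ ∉ K ∙ (r ᵥ* P) := by
    refine SetLike.not_le_iff_exists.1 fun hle => ?_
    have := Submodule.finrank_mono hle
    rw [finrank_span_singleton hr] at this
    omega
  -- `E₁₂ g` has rows `r P, 0, 0`, and so has `g P` since `r P P = 0` and `r₂ P = 0`
  refine ⟨of ![r, r ᵥ* P, r₂], ?_, ?_⟩
  · rw [← isUnit_iff_isUnit_det, ← linearIndependent_rows_iff_isUnit]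
    refine linearIndependent_finCons.2
      ⟨(LinearIndependent.pair_iff' hr).2 fun a ha => hr₂ ?_, ?_⟩
    · exact ha ▸ Submodule.smul_mem _ a (Submodule.mem_span_singleton_self _)
    · intro hmem
      refine hr (Submodule.span_le.2 (Set.range_subset_iff.2 fun i => ?_) hmem :
        r ∈ ker P.vecMulLinear)
      fin_cases i
      exacts [hrange ⟨r, rfl⟩, hr₂P]
  · have hr₂P : r₂ ᵥ* P = 0 := hr₂P
    ext i j
    fin_cases i <;> simp [vecMul_vecMul, hPP, hr₂P, single_mul_apply_of_ne]

section Centralizer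

variable (P : Matrix n n K)

theorem mem_ker_mulLeft_sub_mulRight {X : Matrix n n K} :
    X ∈ ker (mulLeft K P - mulRight K P) ↔ P * X = X * P := by
  simp [sub_eq_zero]

theorem finrank_lt_finrank_centralizer [CharZero K] [Nonempty n] :
    finrank K (ker (traceLinearMap n K K) ⊓ ker ((traceLinearMap n K K).comp (mulLeft K P)) ⊓
      ker (mulLeft K P - mulRight K P) : Submodule K (Matrix n n K)) <
    finrank K (ker (mulLeft K P - mulRight K P)) := by
  refine Submodule.finrank_lt_finrank_of_lt (SetLike.lt_iff_le_and_exists.2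
    ⟨inf_le_right, 1, (mem_ker_mulLeft_sub_mulRight P).2 (by simp), fun h => ?_⟩)
  simpa using h.1.1

theorem finrank_add_two_le_finrank_centralizer [CharZero K] [Nonempty n] (htr : trace P = 0)
    (htrsq : trace (P * P) ≠ 0) :
    finrank K (ker (traceLinearMap n K K) ⊓ ker ((traceLinearMap n K K).comp (mulLeft K P)) ⊓
      ker (mulLeft K P - mulRight K P) : Submodule K (Matrix n n K)) + 2 ≤
    finrank K (ker (mulLeft K P - mulRight K P)) := by
  set W : Submodule K (Matrix n n K) :=
    ker (traceLinearMap n K K) ⊓ ker ((traceLinearMap n K K).comp (mulLeft K P)) ⊓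
      ker (mulLeft K P - mulRight K P)
  have hPW : W < W ⊔ K ∙ P := SetLike.lt_iff_le_and_exists.2
    ⟨le_sup_left, P, Submodule.mem_sup_right (Submodule.mem_span_singleton_self P),
      fun h => htrsq h.1.2⟩
  have htrace : W ⊔ K ∙ P ≤ ker (traceLinearMap n K K) :=
    sup_le (inf_le_left.trans inf_le_left) ((Submodule.span_singleton_le_iff_mem _ _).2 htr)
  have hC : W ⊔ K ∙ P < ker (mulLeft K P - mulRight K P) := SetLike.lt_iff_le_and_exists.2
    ⟨sup_le inf_le_right ((Submodule.span_singleton_le_iff_mem _ _).2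
        ((mem_ker_mulLeft_sub_mulRight P).2 rfl)),
      1, (mem_ker_mulLeft_sub_mulRight P).2 (by simp), fun h => by simpa using htrace h⟩
  have := Submodule.finrank_lt_finrank_of_lt hPW
  have := Submodule.finrank_lt_finrank_of_lt hC
  omega

variable {P}

theorem finrank_centralizer_le_card_add_finrank_ker {v w : n → K} {c : K}
    (hspan : Submodule.span K (Set.range ![v, P *ᵥ v]) ⊔ K ∙ w = ⊤)
    (hc : (P - c • 1) *ᵥ w ∈ Submodule.span K (Set.range ![v, P *ᵥ v])) :
    finrank K (ker (mulLeft K P - mulRight K P)) ≤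
      Fintype.card n + finrank K (ker (P - c • 1).mulVecLin) := by
  set S := Submodule.span K (Set.range ![v, P *ᵥ v])
  set C := ker (mulLeft K P - mulRight K P)
  let ψ : C →ₗ[K] n → K := ((mulVecBilin K K).flip v).domRestrict C
  have hS : ∀ X : ker ψ, S ≤ ker (X : Matrix n n K).mulVecLin := fun X =>
    span_pair_le_ker_mulVecLin ((mem_ker_mulLeft_sub_mulRight P).1 X.1.2) X.2
  have hmaps : ∀ X : ker ψ, (X : Matrix n n K) *ᵥ w ∈ ker (P - c • 1).mulVecLin := by
    intro X
    have hPX := (mem_ker_mulLeft_sub_mulRight P).1 X.1.2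
    have hcomm : (P - c • 1) * X = X * (P - c • 1) := by
      rw [sub_mul, mul_sub, hPX, Matrix.smul_mul, Matrix.mul_smul, Matrix.one_mul, Matrix.mul_one]
    change (P - c • 1) *ᵥ ((X : Matrix n n K) *ᵥ w) = 0
    rw [mulVec_mulVec, hcomm, ← mulVec_mulVec]
    exact hS X hc
  let φ : ker ψ →ₗ[K] ker (P - c • 1).mulVecLin :=
    codRestrict _ (((mulVecBilin K K).flip w).comp (C.subtype.comp (ker ψ).subtype)) hmaps
  have hφ : Function.Injective φ := by
    refine fun X Y hXY => sub_eq_zero.1 ?_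
    have hX : φ (X - Y) = 0 := (LinearMap.map_sub φ X Y).trans (by rw [hXY, sub_self])
    generalize X - Y = X at hX ⊢
    have hXw : (X : Matrix n n K) *ᵥ w = 0 := congrArg Subtype.val hX
    have htop : ⊤ ≤ ker (X : Matrix n n K).mulVecLin :=
      hspan ▸ sup_le (hS X) ((Submodule.span_singleton_le_iff_mem _ _).2 hXw)
    rw [top_le_iff, ker_eq_top, ← toLin'_apply', LinearEquiv.map_eq_zero_iff] at htop
    exact Subtype.ext (Subtype.ext htop)
  calc finrank K C = finrank K (range ψ) + finrank K (ker ψ) :=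
        (finrank_range_add_finrank_ker ψ).symm
    _ ≤ Fintype.card n + finrank K (ker (P - c • 1).mulVecLin) :=
        add_le_add (by simpa using (range ψ).finrank_le) (finrank_le_finrank_of_injective hφ)

theorem exists_finrank_centralizer_add_rank_sub_smul_le {P : Matrix (Fin 3) (Fin 3) K}
    (hP : ∀ c : K, P ≠ c • 1) :
    ∃ c : K, finrank K (ker (mulLeft K P - mulRight K P)) + (P - c • 1).rank ≤ 6 := by
  obtain ⟨v, hv⟩ := exists_linearIndependent_mulVec hP
  set S := Submodule.span K (Set.range ![v, P *ᵥ v])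
  obtain ⟨w, hSw⟩ : ∃ w, S ⊔ K ∙ w = ⊤ :=
    Submodule.exists_sup_span_singleton_eq_top (by rw [finrank_span_eq_card hv]; simp)
  obtain ⟨c, hc⟩ : ∃ c : K, (P - c • 1) *ᵥ w ∈ S := by
    obtain ⟨s, hs, y, hy, hPw⟩ :=
      Submodule.mem_sup.1 (hSw ▸ Submodule.mem_top (x := P *ᵥ w))
    obtain ⟨c, rfl⟩ := Submodule.mem_span_singleton.1 hy
    refine ⟨c, ?_⟩
    rwa [sub_mulVec, smul_mulVec, one_mulVec, ← hPw, add_sub_cancel_right]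
  refine ⟨c, ?_⟩
  have hrank := finrank_range_add_finrank_ker (P - c • 1).mulVecLin
  have := finrank_centralizer_le_card_add_finrank_ker hSw hc
  simp only [finrank_fin_fun, Fintype.card_fin] at hrank this
  rw [rank]
  omega

end Centralizer

end Matrix

/-- If `P ∈ sl(3,ℂ)` is nonzero and the kernel of `ad(P)` restricted to the
trace-form orthogonal complement `P^⊥` has dimension at least 4, then `P` is
conjugate to the elementary nilpotent matrix `E₁₂`. -/
theorem adP_large_kernel_implies_conjugate_to_E12
    (P : Matrix (Fin 3) (Fin 3) ℂ) (hP0 : P ≠ 0) (htr : Matrix.trace P = 0)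
    (hker : 4 ≤ Module.finrank ℂ
      (LinearMap.ker (Matrix.traceLinearMap (Fin 3) ℂ ℂ) ⊓
       LinearMap.ker ((Matrix.traceLinearMap (Fin 3) ℂ ℂ).comp (LinearMap.mulLeft ℂ P)) ⊓
       LinearMap.ker (LinearMap.mulLeft ℂ P - LinearMap.mulRight ℂ P) :
        Submodule ℂ (Matrix (Fin 3) (Fin 3) ℂ))) :
    ∃ g : Matrix.SpecialLinearGroup (Fin 3) ℂ,
      (↑g : Matrix (Fin 3) (Fin 3) ℂ) * P * (↑g⁻¹ : Matrix (Fin 3) (Fin 3) ℂ) =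
        Matrix.single 0 1 1 := by
  have hscalar : ∀ c : ℂ, P ≠ c • 1 := by
    rintro c rfl
    simp_all
  obtain ⟨c, hc⟩ := exists_finrank_centralizer_add_rank_sub_smul_le hscalar
  have hW := finrank_lt_finrank_centralizer P
  have hrank : (P - c • 1).rank ≤ 1 := by omega
  have htrsq : trace (P * P) = 0 := by
    by_contra h
    have := finrank_add_two_le_finrank_centralizer P htr h
    exact hscalar c (sub_eq_zero.1 (rank_eq_zero_iff.1 (by omega)))
  have hPP := mul_self_eq_zero_of_rank_sub_smul_one_le_one (by simp) hrank htr htrsq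
  obtain ⟨g, hg, hgP⟩ := exists_isUnit_det_mul_eq_single_mul hP0 hPP
  exact exists_specialLinearGroup_conj_eq_of_mul_eq_mul hg hgP
end

section
/- The maps (z, z_{n+1}) ↦ (a z + b, 2a H_{p,n}(z, conj b) + a² z_{n+1} + H_{p,n}(b, conj b) + i c), with a ∈ ℝ \ {0}, b ∈ ℂⁿ, c ∈ ℝ, act transitively on the domain D_{H_{p,n}}^> = {(z, z_{n+1}) ∈ ℂ^{n+1} : Re z_{n+1} > H_{p,n}(z, conj z)}, and each such map preserves D_{H_{p,n}}^>. -/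
open Complex

/-- The maps `(z, z_{n+1}) ↦ (a z + b, 2a H(z, conj b) + a² z_{n+1} + H(b, conj b) + ic)`
preserve the domain `D_{H_{p,n}}^> = {Re z_{n+1} > H(z, conj z)}` and act
transitively on it, where `H` is the diagonal Hermitian form of signature
`(p, n−p)`. -/
theorem Siegel_type_domain_homogeneous (n p : ℕ) (hpn : p ≤ n) :
    let h : (Fin n → ℂ) → (Fin n → ℂ) → ℂ := fun z w =>
      ∑ j : Fin n, (if (j : ℕ) < p then (1 : ℂ) else -1) * z j * (starRingEnd ℂ) (w j)
    let D : Set ((Fin n → ℂ) × ℂ) := {P | (h P.1 P.1).re < P.2.re}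
    let T : ℝ → (Fin n → ℂ) → ℝ → ((Fin n → ℂ) × ℂ) → ((Fin n → ℂ) × ℂ) := fun a b c P =>
      ((a : ℂ) • P.1 + b,
        2 * (a : ℂ) * h P.1 b + (a : ℂ) ^ 2 * P.2 + h b b + Complex.I * c)
    (∀ (a : ℝ) (b : Fin n → ℂ) (c : ℝ), a ≠ 0 → ∀ P ∈ D, T a b c P ∈ D) ∧
    (∀ P ∈ D, ∀ Q ∈ D, ∃ (a : ℝ) (b : Fin n → ℂ) (c : ℝ), a ≠ 0 ∧ T a b c P = Q) := by
  intro h D T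
  have key : ∀ (a : ℝ) (z b : Fin n → ℂ),
      (h ((a : ℂ) • z + b) ((a : ℂ) • z + b)).re
        = a ^ 2 * (h z z).re + 2 * a * (h z b).re + (h b b).re := by
    intro a z b
    simp only [h, Complex.re_sum, Finset.mul_sum, ← Finset.sum_add_distrib]
    apply Finset.sum_congr rfl
    intro j _
    split_ifs <;>
    · simp only [Pi.add_apply, Pi.smul_apply, smul_eq_mul, map_add, map_mul,
        Complex.conj_ofReal, Complex.mul_re, Complex.mul_im, Complex.add_re,
        Complex.add_im, Complex.conj_re, Complex.conj_im, Complex.ofReal_re,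
        Complex.ofReal_im, Complex.neg_re, Complex.neg_im, Complex.one_re,
        Complex.one_im, pow_two]
      ring
  have hre : ∀ (a c : ℝ) (z1 b : Fin n → ℂ) (z2 : ℂ),
      (2 * (a : ℂ) * h z1 b + (a : ℂ) ^ 2 * z2 + h b b + Complex.I * c).re
        = 2 * a * (h z1 b).re + a ^ 2 * z2.re + (h b b).re := by
    intro a c z1 b z2
    simp only [Complex.add_re, Complex.mul_re, Complex.mul_im, Complex.I_re,
      Complex.I_im, Complex.ofReal_re, Complex.ofReal_im, Complex.re_ofNat,
      Complex.im_ofNat, pow_two]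
    ring
  constructor
  · intro a b c ha P hP
    simp only [D, Set.mem_setOf_eq, T] at hP ⊢
    rw [key a P.1 b, hre]
    have h2 : 0 < a ^ 2 := by positivity
    nlinarith [hP]
  · intro P hP Q hQ
    simp only [D, Set.mem_setOf_eq] at hP hQ
    set dP := P.2.re - (h P.1 P.1).re with hdP
    set dQ := Q.2.re - (h Q.1 Q.1).re with hdQ
    have hdPpos : 0 < dP := sub_pos.mpr hP
    have hdQpos : 0 < dQ := sub_pos.mpr hQ
    have hdiv : 0 < dQ / dP := div_pos hdQpos hdPpos
    set a := Real.sqrt (dQ / dP) with haa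
    have hapos : 0 < a := Real.sqrt_pos.mpr hdiv
    have ha2 : a ^ 2 = dQ / dP := Real.sq_sqrt hdiv.le
    have ha2dP : a ^ 2 * dP = dQ := by
      rw [ha2]; field_simp
    set b : Fin n → ℂ := Q.1 - (a : ℂ) • P.1 with hb
    have hb1 : (a : ℂ) • P.1 + b = Q.1 := by
      simp [hb]
    set X : ℂ := 2 * (a : ℂ) * h P.1 b + (a : ℂ) ^ 2 * P.2 + h b b with hX
    refine ⟨a, b, Q.2.im - X.im, ne_of_gt hapos, ?_⟩
    simp only [T]
    refine Prod.ext hb1 ?_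
    apply Complex.ext
    · have hQ1 : (h Q.1 Q.1).re
          = a ^ 2 * (h P.1 P.1).re + 2 * a * (h P.1 b).re + (h b b).re := by
        rw [← hb1]; exact key a P.1 b
      have hXre : X.re = 2 * a * (h P.1 b).re + a ^ 2 * P.2.re + (h b b).re := by
        have := hre a 0 P.1 b P.2
        simpa [hX] using this
      have : (Complex.I * ((Q.2.im - X.im : ℝ) : ℂ)).re = 0 := by
        simp
      show (X + Complex.I * ((Q.2.im - X.im : ℝ) : ℂ)).re = Q.2.re
      rw [Complex.add_re, this, hXre]
      nlinarith [ha2dP, hQ1, hdQ]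
    · show (X + Complex.I * ((Q.2.im - X.im : ℝ) : ℂ)).im = Q.2.im
      simp
end

section
/- The holomorphic polynomial map C : ℂ³ → ℂ³ given by C(z₁,z₂,z₃) = ((1/√2)(z₁+z₂+(3/2)z₁²), (1/√2)(z₁−z₂−(3/2)z₁²), 4z₃−2z₁z₂−z₁³) satisfies, for all z ∈ ℂ³: Re(C₃(z)) − |C₁(z)|² + |C₂(z)|² = 4(Re z₃ − Re z₁ · Re z₂ − (Re z₁)³). -/
open Complex ComplexConjugate

/-! Writing `b = z₂ + (3/2) z₁²`, the first two components are `(z₁ ± b)/√2`, so by polarization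
`|C₁|² − |C₂|² = 2 Re (z₁ b̄)`. What remains is the real-part bookkeeping
`Re (z₁z₂) + Re (z₁z̄₂) = 2 x₁x₂` and `Re z₁³ + 3 Re (z₁ z̄₁²) = 4 x₁³`, which makes the
imaginary parts cancel. -/

namespace Complex

lemma norm_add_sq_sub_norm_sub_sq (a b : ℂ) :
    ‖a + b‖ ^ 2 - ‖a - b‖ ^ 2 = 4 * (a * conj b).re := by
  simp only [Complex.sq_norm, normSq_add, normSq_sub]
  ring

lemma norm_one_div_sqrt_mul_sq {r : ℝ} (hr : 0 ≤ r) (w : ℂ) :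
    ‖(1 / (Real.sqrt r : ℂ)) * w‖ ^ 2 = ‖w‖ ^ 2 / r := by
  rw [norm_mul, mul_pow, norm_div, norm_one, norm_real, Real.norm_of_nonneg (Real.sqrt_nonneg r),
    div_pow, Real.sq_sqrt hr]
  ring

lemma re_mul_add_re_mul_conj (z w : ℂ) : (z * w).re + (z * conj w).re = 2 * z.re * w.re := by
  simp only [mul_re, conj_re, conj_im]
  ring

lemma re_pow_three_add_three_mul_re_mul_conj_sq (z : ℂ) :
    (z ^ 3).re + 3 * (z * conj (z ^ 2)).re = 4 * z.re ^ 3 := by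
  simp only [pow_succ, pow_zero, one_mul, map_mul, mul_re, mul_im, conj_re, conj_im]
  ring

end Complex

/-- The polynomial map transforming the tube over the Cayley surface
`x₃ = x₁x₂ + x₁³` into the quadric `Re z₃ = |z₁|² − |z₂|²`. -/
theorem cayley_tube_to_quadric_identity (z₁ z₂ z₃ : ℂ) :
    let C₁ := (1 / (Real.sqrt 2 : ℂ)) * (z₁ + z₂ + (3 / 2) * z₁ ^ 2)
    let C₂ := (1 / (Real.sqrt 2 : ℂ)) * (z₁ - z₂ - (3 / 2) * z₁ ^ 2)
    let C₃ := 4 * z₃ - 2 * z₁ * z₂ - z₁ ^ 3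
    C₃.re - ‖C₁‖ ^ 2 + ‖C₂‖ ^ 2 =
      4 * (z₃.re - z₁.re * z₂.re - z₁.re ^ 3) := by
  intro C₁ C₂ C₃
  have polarization : ‖C₁‖ ^ 2 - ‖C₂‖ ^ 2 = 2 * (z₁ * conj (z₂ + (3 / 2) * z₁ ^ 2)).re := by
    simp only [C₁, C₂, norm_one_div_sqrt_mul_sq zero_le_two, add_assoc, sub_sub]
    rw [← sub_div, norm_add_sq_sub_norm_sub_sq]
    ring
  have re_conj_expand : (z₁ * conj (z₂ + (3 / 2) * z₁ ^ 2)).re =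
      (z₁ * conj z₂).re + 3 / 2 * (z₁ * conj (z₁ ^ 2)).re := by
    rw [map_add, mul_add, add_re, map_mul, map_div₀, map_ofNat, map_ofNat, mul_left_comm,
      ← ofReal_ofNat 3, ← ofReal_ofNat 2, ← ofReal_div, re_ofReal_mul]
  have re_C₃ : C₃.re = 4 * z₃.re - 2 * (z₁ * z₂).re - (z₁ ^ 3).re := by
    simp [C₃, mul_assoc]
  linear_combination re_C₃ - polarization - 2 * re_conj_expand
    - 2 * re_mul_add_re_mul_conj z₁ z₂ - re_pow_three_add_three_mul_re_mul_conj_sq z₁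
end
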